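/- arXiv:2107.04100 — 8 statements merged into one kernel-verified Lean document; each statement's English description precedes it below -/
import Mathlib

section
/- For all natural numbers n, d with d ≤ n and all real c with 0 ≤ c ≤ n, the degree-d Chebyshev polynomial of the first kind satisfies T_d(-1 - c/n)^2 ≥ (1/4)·(1 + sqrt(2c/n))^(2d). -/
open Polynomial Chebyshev

lemma cheb_eval_neg (x : ℝ) (hx : 1 ≤ x) :
    ∀ d : ℕ, (Polynomial.Chebyshev.T ℝ d).eval (-x) =
      (-1 : ℝ) ^ d * ((x + Real.sqrt (x ^ 2 - 1)) ^ d + (x - Real.sqrt (x ^ 2 - 1)) ^ d) / 2 := by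
  set s := Real.sqrt (x ^ 2 - 1) with hs
  have hs2 : s ^ 2 = x ^ 2 - 1 := Real.sq_sqrt (by nlinarith)
  intro d
  induction d using Nat.twoStepInduction with
  | zero => simp
  | one => simp [Polynomial.Chebyshev.T_one]
  | more d ih1 ih2 =>
    push_cast
    rw [Polynomial.Chebyshev.T_add_two]
    simp only [Polynomial.eval_sub, Polynomial.eval_mul, Polynomial.eval_ofNat, Polynomial.eval_X]
    push_cast at ih1 ih2
    rw [ih1, ih2]
    linear_combination (-(-1:ℝ)^d * ((x+s)^d + (x-s)^d) / 2) * hs2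

theorem stmt_0 (n d : ℕ) (hn : 0 < n) (hd : d ≤ n) (c : ℝ) (hc0 : 0 ≤ c) (hcn : c ≤ n) :
    ((Polynomial.Chebyshev.T ℝ d).eval (-1 - c / n)) ^ 2 ≥
      (1 / 4) * (1 + Real.sqrt (2 * c / n)) ^ (2 * d) := by
  have hn' : (0 : ℝ) < n := by exact_mod_cast hn
  obtain ⟨y, hy⟩ : ∃ y : ℝ, y = 1 + c / n := ⟨_, rfl⟩
  have hcd : 0 ≤ c / (n:ℝ) := div_nonneg hc0 hn'.le
  have hy1 : 1 ≤ y := by rw [hy]; linarith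
  have hkey := cheb_eval_neg y hy1 d
  have hx : (-1 - c / n : ℝ) = -y := by rw [hy]; ring
  rw [hx, hkey]
  obtain ⟨s, hs⟩ : ∃ s : ℝ, s = Real.sqrt (y ^ 2 - 1) := ⟨_, rfl⟩
  rw [← hs]
  have hs0 : 0 ≤ s := hs ▸ Real.sqrt_nonneg _
  have hs2 : s ^ 2 = y ^ 2 - 1 := hs ▸ Real.sq_sqrt (by nlinarith)
  have hsy : s ≤ y := by nlinarith
  have hb : 0 ≤ (y - s) ^ d := pow_nonneg (by linarith) d
  have ha1 : 1 + Real.sqrt (2 * c / n) ≤ y + s := by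
    have h1 : Real.sqrt (2 * c / n) ≤ s := by
      rw [hs]
      apply Real.sqrt_le_sqrt
      have : y ^ 2 - 1 = 2 * (c / n) + (c / n) ^ 2 := by rw [hy]; ring
      rw [this, mul_div_assoc]
      nlinarith [sq_nonneg (c / n)]
    linarith
  have h0 : (0 : ℝ) ≤ 1 + Real.sqrt (2 * c / n) := by positivity
  have hpow : (1 + Real.sqrt (2 * c / n)) ^ (2 * d) ≤ (y + s) ^ (2 * d) :=
    pow_le_pow_left₀ h0 ha1 _
  have hsq : ((-1 : ℝ) ^ d * ((y + s) ^ d + (y - s) ^ d) / 2) ^ 2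
      = (((y + s) ^ d + (y - s) ^ d) / 2) ^ 2 := by
    rcases Nat.even_or_odd d with h | h
    · rw [h.neg_one_pow]; ring
    · rw [h.neg_one_pow]; ring
  rw [hsq, ge_iff_le]
  have : (y + s) ^ (2 * d) = ((y + s) ^ d) ^ 2 := by rw [mul_comm, pow_mul]
  nlinarith [sq_nonneg ((y + s) ^ d + (y - s) ^ d), pow_nonneg (by linarith : (0:ℝ) ≤ y + s) d]
end

section
/- For all natural numbers n, d with d ≤ n and all real c with 0 ≤ c ≤ n, the degree-d Chebyshev polynomial of the first kind satisfies T_d(-1 - c/n)^2 ≤ (1 + 2·sqrt(2c/n))^(2d). -/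
open Polynomial.Chebyshev

lemma cheb_formula (y s : ℝ) (hs : s^2 = y^2 - 1) :
    ∀ d : ℕ, (Polynomial.Chebyshev.T ℝ d).eval y = ((y+s)^d + (y-s)^d)/2 := by
  intro d
  induction d using Nat.twoStepInduction with
  | zero => simp [Polynomial.Chebyshev.T_zero]
  | one => simp [Polynomial.Chebyshev.T_one]
  | more d ih1 ih2 =>
    have hcast : ((d + 2 : ℕ) : ℤ) = (d : ℤ) + 2 := by push_cast; ring
    rw [hcast, Polynomial.Chebyshev.T_add_two]
    have hcast1 : ((d : ℤ) + 1) = ((d + 1 : ℕ) : ℤ) := by push_cast; ring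
    rw [hcast1]
    simp only [Polynomial.eval_sub, Polynomial.eval_mul, Polynomial.eval_ofNat,
      Polynomial.eval_X]
    rw [ih1, ih2]
    linear_combination (-(((y+s)^d + (y-s)^d)/2)) * hs

theorem stmt_1 (n d : ℕ) (hn : 0 < n) (hd : d ≤ n) (c : ℝ) (hc0 : 0 ≤ c) (hcn : c ≤ n) :
    ((Polynomial.Chebyshev.T ℝ d).eval (-1 - c / n)) ^ 2 ≤
      (1 + 2 * Real.sqrt (2 * c / n)) ^ (2 * d) := by
  have hnR : (0:ℝ) < n := by exact_mod_cast hn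
  set ε : ℝ := c / n with hε
  have hε0 : 0 ≤ ε := div_nonneg hc0 hnR.le
  have hε1 : ε ≤ 1 := by rw [hε, div_le_one hnR]; exact hcn
  set x : ℝ := -1 - ε with hx
  have hx2 : x^2 - 1 = 2*ε + ε^2 := by rw [hx]; ring
  set s : ℝ := Real.sqrt (2*ε + ε^2) with hsdef
  have hs0 : 0 ≤ s := Real.sqrt_nonneg _
  have hs2 : s^2 = x^2 - 1 := by
    rw [hx2, hsdef, Real.sq_sqrt]; positivity
  set t : ℝ := Real.sqrt (2 * c / n) with htdef
  have ht0 : 0 ≤ t := Real.sqrt_nonneg _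
  have ht2 : t^2 = 2*ε := by
    rw [htdef, Real.sq_sqrt, hε, mul_div_assoc]
    positivity
  -- key scalar inequality: 1 + ε + s ≤ 1 + 2*t
  have hkey : 1 + ε + s ≤ 1 + 2*t := by
    have hts : s ≤ 2*t - ε := by
      have hrhs : 0 ≤ 2*t - ε := by nlinarith [sq_nonneg (t - 1)]
      have : 2*ε + ε^2 ≤ (2*t - ε)^2 := by nlinarith [sq_nonneg t, sq_nonneg (t*(t - ε))]
      calc s ≤ Real.sqrt ((2*t - ε)^2) := Real.sqrt_le_sqrt this
        _ = 2*t - ε := Real.sqrt_sq hrhs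
    linarith
  have hform := cheb_formula x s hs2 d
  have hB : 1 ≤ -(x - s) := by rw [hx]; linarith
  have hA : |x + s| ≤ -(x - s) := by
    have hprod : (x + s) * (x - s) = 1 := by nlinarith [hs2]
    have habs : |x + s| * |x - s| = 1 := by
      rw [← abs_mul, hprod, abs_one]
    have hBabs : |x - s| = -(x - s) := abs_of_nonpos (by linarith)
    nlinarith [abs_nonneg (x + s), habs, hBabs]
  have hTabs : |(Polynomial.Chebyshev.T ℝ d).eval x| ≤ (1 + 2*t)^d := by
    rw [hform]
    have h1 : |((x+s)^d + (x-s)^d)/2| ≤ (|x+s|^d + |x-s|^d)/2 := by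
      rw [abs_div, abs_two]
      gcongr
      calc |(x+s)^d + (x-s)^d| ≤ |(x+s)^d| + |(x-s)^d| := abs_add_le _ _
        _ = |x+s|^d + |x-s|^d := by rw [abs_pow, abs_pow]
    have hBabs : |x - s| = -(x - s) := abs_of_nonpos (by linarith)
    have h2 : (|x+s|^d + |x-s|^d)/2 ≤ (-(x - s))^d := by
      have hp1 : |x+s|^d ≤ (-(x-s))^d := pow_le_pow_left₀ (abs_nonneg _) hA d
      have hp2 : |x-s|^d ≤ (-(x-s))^d := by rw [hBabs]
      linarith
    have h3 : (-(x - s))^d ≤ (1 + 2*t)^d := by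
      apply pow_le_pow_left₀ (by linarith)
      rw [hx]; linarith [hkey]
    linarith
  have hxeq : (-1 - c / n : ℝ) = x := by rw [hx, hε]
  rw [← sq_abs, mul_comm 2 d, pow_mul]
  exact pow_le_pow_left₀ (abs_nonneg _) hTabs 2
end

section
/- For all natural numbers n, d with d ≤ n and all real c with c > n, the degree-d Chebyshev polynomial of the first kind satisfies T_d(-1 - c/n)^2 ≤ (1 + 3c/n)^(2d). -/
open Polynomial Polynomial.Chebyshev

lemma cheb_key (x : ℝ) (hx : 1 ≤ x) : ∀ d : ℕ,
    ((T ℝ d).eval (-x) = (-1)^d * (T ℝ d).eval x ∧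
     (T ℝ (d+1)).eval (-x) = (-1)^(d+1) * (T ℝ (d+1)).eval x) ∧
    (1 ≤ (T ℝ d).eval x ∧ (T ℝ d).eval x ≤ (T ℝ (d+1)).eval x ∧
     (T ℝ d).eval x ≤ (2*x)^d ∧ (T ℝ (d+1)).eval x ≤ (2*x)^(d+1)) := by
  intro d
  induction d with
  | zero => simp [T_zero, T_one]; constructor <;> nlinarith
  | succ d ih =>
    obtain ⟨⟨hn1, hn2⟩, h1, h2, h3, h4⟩ := ih
    have hrec : ∀ y : ℝ, (T ℝ (d+1+1)).eval y = 2*y*(T ℝ (d+1)).eval y - (T ℝ d).eval y := by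
      intro y
      have := T_add_two ℝ d
      have h2 : ((d:ℤ)+1+1) = (d:ℤ)+2 := by ring
      rw [h2, this]
      simp
    have hx0 : 0 < x := by linarith
    have hT1 : 1 ≤ (T ℝ (d+1)).eval x := le_trans h1 h2
    refine ⟨⟨hn2, ?_⟩, hT1, ?_, h4, ?_⟩
    · push_cast
      rw [hrec, hrec]
      push_cast at hn1 hn2
      rw [hn1, hn2]; ring
    · push_cast
      rw [hrec]
      push_cast
      nlinarith
    · push_cast
      rw [hrec]
      push_cast
      have : (0:ℝ) ≤ (2*x)^(d+1) := by positivity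
      have h2x : (2*x)^(d+1+1) = 2*x*(2*x)^(d+1) := by ring
      push_cast at h4 ⊢
      nlinarith

theorem stmt_2 (n d : ℕ) (hn : 0 < n) (hd : d ≤ n) (c : ℝ) (hc : (n : ℝ) < c) :
    ((Polynomial.Chebyshev.T ℝ d).eval (-1 - c / n)) ^ 2 ≤
      (1 + 3 * c / n) ^ (2 * d) := by
  have hn' : (0:ℝ) < n := by exact_mod_cast hn
  have hcn : 1 < c / n := (one_lt_div hn').mpr hc
  set x : ℝ := 1 + c / n with hxdef
  have hx : 1 ≤ x := by simp [hxdef]; linarith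
  obtain ⟨⟨hneg, _⟩, h1, _, h3, _⟩ := cheb_key x hx d
  have hE : (-1 - c / n) = -x := by rw [hxdef]; ring
  rw [hE, hneg]
  have hT0 : 0 ≤ (T ℝ d).eval x := by linarith
  have hsq : ((-1:ℝ)^d * (T ℝ d).eval x)^2 = ((T ℝ d).eval x)^2 := by
    rw [mul_pow, ← pow_mul, mul_comm d 2, pow_mul]; norm_num
  rw [hsq]
  have step1 : ((T ℝ d).eval x)^2 ≤ ((2*x)^d)^2 := by
    apply pow_le_pow_left₀ hT0 h3
  have step2 : ((2*x)^d)^2 = (2*x)^(2*d) := by ring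
  have step3 : (2*x : ℝ) ≤ 1 + 3 * c / n := by rw [hxdef, mul_div_assoc]; linarith
  have h2x0 : (0:ℝ) ≤ 2*x := by linarith
  calc ((T ℝ d).eval x)^2 ≤ ((2*x)^d)^2 := step1
    _ = (2*x)^(2*d) := step2
    _ ≤ (1 + 3*c/n)^(2*d) := pow_le_pow_left₀ h2x0 step3 (2*d)
end

section
/- Let k ≥ 2 be a natural number, let a_k(x) = ∏_{i ∈ {0,...,2k-1} \ {k-1,k}} (x - i). Then for all real x ∈ (k-2, k-1) and all natural numbers m with 1 ≤ m ≤ k-2, |a_k(x-m)/a_k(x)| ≤ e^(16m²/k). -/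
open Nat

noncomputable def aPoly (k : ℕ) (x : ℝ) : ℝ :=
  (∏ i ∈ Finset.range (k - 1), (x - (i : ℝ))) *
    (∏ i ∈ Finset.Icc (k + 1) (2 * k - 1), (x - (i : ℝ)))

lemma pow_self_le_factorial_mul_exp : ∀ n : ℕ, (n : ℝ) ^ n ≤ (n ! : ℝ) * Real.exp n := by
  intro n
  induction n with
  | zero => simp
  | succ n ih =>
    have hstep : ((n:ℝ) + 1) ^ n ≤ Real.exp 1 * (n : ℝ) ^ n := by
      rcases Nat.eq_zero_or_pos n with h0 | hpos
      · subst h0; simpa using Real.one_le_exp (by norm_num : (0:ℝ) ≤ 1)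
      · have hn : (0:ℝ) < n := by exact_mod_cast hpos
        have h1 : (n:ℝ) + 1 ≤ (n:ℝ) * Real.exp (1 / n) := by
          have := Real.add_one_le_exp (1 / (n:ℝ))
          calc (n:ℝ) + 1 = (n:ℝ) * (1/n + 1) := by field_simp; ring
            _ ≤ (n:ℝ) * Real.exp (1/n) := by
                apply mul_le_mul_of_nonneg_left (by linarith) (le_of_lt hn)
        calc ((n:ℝ)+1)^n ≤ ((n:ℝ) * Real.exp (1/n))^n := by
              apply pow_le_pow_left₀ (by positivity) h1
          _ = (n:ℝ)^n * (Real.exp (1/n))^n := by rw [mul_pow]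
          _ = (n:ℝ)^n * Real.exp 1 := by
              rw [← Real.exp_nat_mul]
              congr 1
              field_simp
          _ = Real.exp 1 * (n:ℝ)^n := by ring
    have hfn : (0:ℝ) ≤ (n:ℝ) + 1 := by positivity
    calc ((n+1 : ℕ) : ℝ) ^ (n+1) = ((n:ℝ)+1) * ((n:ℝ)+1)^n := by push_cast; ring
      _ ≤ ((n:ℝ)+1) * (Real.exp 1 * (n:ℝ)^n) := by
          apply mul_le_mul_of_nonneg_left hstep hfn
      _ ≤ ((n:ℝ)+1) * (Real.exp 1 * ((n ! : ℝ) * Real.exp n)) := by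
          have : Real.exp 1 * (n:ℝ)^n ≤ Real.exp 1 * ((n ! : ℝ) * Real.exp n) :=
            mul_le_mul_of_nonneg_left ih (le_of_lt (Real.exp_pos 1))
          exact mul_le_mul_of_nonneg_left this hfn
      _ = (((n+1) ! : ℕ) : ℝ) * Real.exp ((n:ℝ)+1) := by
          push_cast [Nat.factorial_succ, Real.exp_add]
          ring
      _ = (((n+1) ! : ℕ) : ℝ) * Real.exp ((n+1 : ℕ)) := by push_cast; ring

lemma helper_swap (f : ℕ → ℝ) (n m : ℕ) :
    (∏ i ∈ Finset.range n, f (m + i)) * ∏ j ∈ Finset.range m, f j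
      = (∏ i ∈ Finset.range n, f i) * ∏ j ∈ Finset.range m, f (n + j) := by
  have a1 := Finset.prod_range_add f m n
  have a2 := Finset.prod_range_add f n m
  rw [add_comm m n] at a1
  rw [mul_comm, ← a1, a2]

set_option maxHeartbeats 1000000 in
theorem stmt_3 (k : ℕ) (hk : 2 ≤ k) (x : ℝ)
    (hx1 : (k : ℝ) - 2 < x) (hx2 : x < (k : ℝ) - 1)
    (m : ℕ) (hm1 : 1 ≤ m) (hm2 : m ≤ k - 2) :
    |aPoly k (x - m) / aPoly k x| ≤ Real.exp (16 * (m : ℝ) ^ 2 / k) := by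
  have hk3 : 3 ≤ k := by omega
  have hm2' : m + 2 ≤ k := by omega
  have hK3 : (3:ℝ) ≤ (k:ℝ) := by exact_mod_cast hk3
  have hMK : (m:ℝ) + 2 ≤ (k:ℝ) := by exact_mod_cast hm2'
  have hM1 : (1:ℝ) ≤ (m:ℝ) := by exact_mod_cast hm1
  set K := (k:ℝ) with hKdef
  set M := (m:ℝ) with hMdef
  set g : ℕ → ℝ := fun n => |x - n| with hgdef
  set C1 := ∏ j ∈ Finset.range m, g j with hC1
  set B1 := ∏ j ∈ Finset.range m, g (k - 1 + j) with hB1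
  set C2 := ∏ j ∈ Finset.range m, g (k + 1 + j) with hC2
  set B2 := ∏ j ∈ Finset.range m, g (2 * k + j) with hB2
  set Q := ∏ j ∈ Finset.range m, ((K + 2 + j) / (K - 1 - M + j)) with hQ
  set E := Real.exp (16 * M ^ 2 / K) with hE
  -- Icc to range conversion
  have icc : ∀ h : ℕ → ℝ, ∏ i ∈ Finset.Icc (k+1) (2*k-1), h i
      = ∏ i ∈ Finset.range (k-1), h (k+1+i) := by
    intro h
    rw [← Finset.Ico_add_one_right_eq_Icc, Finset.prod_Ico_eq_prod_range]
    have h2 : 2*k - 1 + 1 - (k+1) = k - 1 := by omega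
    rw [h2]
  have habs1 : |aPoly k x|
      = (∏ i ∈ Finset.range (k-1), g i) * (∏ i ∈ Finset.range (k-1), g (k+1+i)) := by
    rw [aPoly, abs_mul, Finset.abs_prod, Finset.abs_prod, icc (fun i => |x - (i:ℝ)|)]
  have habs2 : |aPoly k (x - M)|
      = (∏ i ∈ Finset.range (k-1), g (m + i)) * (∏ i ∈ Finset.range (k-1), g (k+1+(m+i))) := by
    rw [aPoly, abs_mul, Finset.abs_prod, Finset.abs_prod, icc (fun i => |x - M - (i:ℝ)|)]
    congr 1
    · refine Finset.prod_congr rfl (fun i _ => ?_)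
      rw [hgdef]
      congr 1
      push_cast [hMdef]
      ring
    · refine Finset.prod_congr rfl (fun i _ => ?_)
      rw [hgdef]
      congr 1
      push_cast [hMdef]
      ring
  -- key identity
  have key : |aPoly k (x - M)| * (C1 * C2) = |aPoly k x| * (B1 * B2) := by
    have h1 := helper_swap g (k-1) m
    have h2 := helper_swap (fun j => g (k+1+j)) (k-1) m
    simp only [] at h2
    have hB2' : (∏ j ∈ Finset.range m, g (k+1+(k-1+j))) = B2 := by
      rw [hB2]
      refine Finset.prod_congr rfl (fun j _ => ?_)
      congr 1
      omega
    rw [hB2'] at h2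
    rw [habs1, habs2]
    calc (∏ i ∈ Finset.range (k-1), g (m + i)) * (∏ i ∈ Finset.range (k-1), g (k+1+(m+i)))
          * (C1 * C2)
        = ((∏ i ∈ Finset.range (k-1), g (m + i)) * C1)
          * ((∏ i ∈ Finset.range (k-1), g (k+1+(m+i))) * C2) := by ring
      _ = ((∏ i ∈ Finset.range (k-1), g i) * B1)
          * ((∏ i ∈ Finset.range (k-1), g (k+1+i)) * B2) := by
          rw [hC1, hB1] at *
          rw [h1, hC2] at *
          rw [← h2]
      _ = (∏ i ∈ Finset.range (k-1), g i) * (∏ i ∈ Finset.range (k-1), g (k+1+i))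
          * (B1 * B2) := by ring
  -- generic eval lemmas for g
  have gevalL : ∀ n : ℕ, x ≤ (n:ℝ) → g n = (n:ℝ) - x := by
    intro n hn
    rw [hgdef]
    dsimp only
    rw [abs_of_nonpos (by linarith), neg_sub]
  have gevalR : ∀ n : ℕ, (n:ℝ) ≤ x → g n = x - (n:ℝ) := by
    intro n hn
    rw [hgdef]
    dsimp only
    exact abs_of_nonneg (by linarith)
  -- positivity
  have gpos : ∀ n : ℕ, x ≠ (n:ℝ) → 0 < g n := by
    intro n hn
    rw [hgdef]
    dsimp only
    exact abs_pos.mpr (sub_ne_zero.mpr hn)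
  have hC1pos : 0 < C1 := by
    rw [hC1]
    apply Finset.prod_pos
    intro j hj
    have hj' : j + 1 ≤ m := Finset.mem_range.mp hj
    have : (j:ℝ) + 1 ≤ M := by rw [hMdef]; exact_mod_cast hj'
    exact gpos j (by intro h; rw [h] at hx1; linarith)
  have hC2pos : 0 < C2 := by
    rw [hC2]
    apply Finset.prod_pos
    intro j hj
    have : ((k+1+j : ℕ):ℝ) = K + 1 + j := by push_cast [hKdef]; ring
    exact gpos _ (by rw [this]; intro h; rw [h] at hx2; push_cast at hx2 ⊢; linarith [Nat.cast_nonneg (α := ℝ) j])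
  have hAxpos : 0 < |aPoly k x| := by
    rw [habs1]
    apply mul_pos
    · apply Finset.prod_pos
      intro i hi
      have hi' : i + 1 ≤ k - 1 := Finset.mem_range.mp hi
      have : (i:ℝ) + 1 ≤ K - 1 := by
        rw [hKdef]
        have : (i:ℝ) + 1 ≤ ((k-1 : ℕ):ℝ) := by exact_mod_cast hi'
        have h2 : ((k-1:ℕ):ℝ) = (k:ℝ) - 1 := by
          rw [Nat.cast_sub (by omega)]; norm_num
        linarith [h2 ▸ this]
      exact gpos i (by intro h; rw [h] at hx1; linarith)
    · apply Finset.prod_pos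
      intro i hi
      have : (K:ℝ) + 1 + i ≤ ((k+1+i : ℕ):ℝ) := by push_cast [hKdef]; ring_nf; linarith [le_refl (0:ℝ)]
      exact gpos _ (by intro h; rw [← h] at this; linarith [Nat.cast_nonneg (α := ℝ) i])
  -- termwise bound : B1 * B2 ≤ Q * (C1 * C2)
  have hBQ : B1 * B2 ≤ Q * (C1 * C2) := by
    have hC1refl : C1 = ∏ j ∈ Finset.range m, g (m - 1 - j) := by
      rw [hC1, Finset.prod_range_reflect]
    rw [hB1, hB2, ← Finset.prod_mul_distrib, hQ, hC1refl, hC2, ← Finset.prod_mul_distrib,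
      ← Finset.prod_mul_distrib]
    apply Finset.prod_le_prod
    · intro j hj
      rw [hgdef]
      dsimp only
      positivity
    · intro j hj
      have hj' : j + 1 ≤ m := Finset.mem_range.mp hj
      have hJM : (j:ℝ) + 1 ≤ M := by rw [hMdef]; exact_mod_cast hj'
      have hJ0 : (0:ℝ) ≤ (j:ℝ) := Nat.cast_nonneg j
      have c1 : ((k - 1 + j : ℕ):ℝ) = K - 1 + j := by
        rw [Nat.cast_add, Nat.cast_sub (by omega : 1 ≤ k), Nat.cast_one, hKdef]
      have c2 : ((2*k + j : ℕ):ℝ) = 2*K + j := by push_cast [hKdef]; ring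
      have c3 : ((m - 1 - j : ℕ):ℝ) = M - 1 - j := by
        have : m - 1 - j = m - (1 + j) := by omega
        rw [this, Nat.cast_sub (by omega : 1 + j ≤ m), Nat.cast_add, Nat.cast_one, hMdef]
        ring
      have c4 : ((k + 1 + j : ℕ):ℝ) = K + 1 + j := by push_cast [hKdef]; ring
      have e1 : g (k - 1 + j) = K - 1 + j - x := by
        rw [gevalL _ (by rw [c1]; linarith), c1]
      have e2 : g (2*k + j) = 2*K + j - x := by
        rw [gevalL _ (by rw [c2]; linarith), c2]
      have e3 : g (m - 1 - j) = x - (M - 1 - j) := by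
        rw [gevalR _ (by rw [c3]; linarith), c3]
      have e4 : g (k + 1 + j) = K + 1 + j - x := by
        rw [gevalL _ (by rw [c4]; linarith), c4]
      rw [e1, e2, e3, e4]
      have hd : (0:ℝ) < K - 1 - M + j := by linarith
      rw [div_mul_eq_mul_div, le_div_iff₀ hd]
      nlinarith [mul_pos (show (0:ℝ) < K - 1 + j - x by linarith) (show (0:ℝ) < K - 1 - M + j by linarith),
        mul_nonneg (show (0:ℝ) ≤ K - 1 + j - x by linarith) (show (0:ℝ) ≤ x - (M - 1 - j) by linarith),
        mul_nonneg (show (0:ℝ) ≤ x - (M - 1 - j) - (K - 1 - M + j) by linarith) (show (0:ℝ) ≤ K + 1 + j - x by linarith),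
        mul_nonneg (show (0:ℝ) ≤ K + 2 + j - (2*K + j - x) by linarith) (show (0:ℝ) ≤ K - 1 - M + j by linarith),
        mul_nonneg (show (0:ℝ) ≤ K + 1 + j - x - (K - 1 + j - x) by norm_num) (show (0:ℝ) ≤ K - 1 - M + j by linarith)]
  -- Q ≤ E
  have hK0 : (0:ℝ) < K := by linarith
  have hQE : Q ≤ E := by
    rcases le_or_gt k (2*m) with hcase | hcase
    · -- k ≤ 2m : use factorial bound
      have hK2M : K ≤ 2*M := by rw [hKdef, hMdef]; exact_mod_cast hcase
      have hfm : (m ! : ℝ) = ∏ j ∈ Finset.range m, ((j:ℝ)+1) := by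
        rw [← Finset.prod_range_add_one_eq_factorial]
        push_cast
        rfl
      have hfmpos : (0:ℝ) < (m ! : ℝ) := by positivity
      have step1 : Q ≤ (2*K)^m / (m ! : ℝ) := by
        have hpc : ((2:ℝ)*K)^m = ∏ _j ∈ Finset.range m, (2*K) := by
          rw [Finset.prod_const, Finset.card_range]
        rw [hfm, hQ, hpc, ← Finset.prod_div_distrib]
        apply Finset.prod_le_prod
        · intro j hj
          have hJ0 : (0:ℝ) ≤ (j:ℝ) := Nat.cast_nonneg j
          have hd : (0:ℝ) < K - 1 - M + j := by linarith
          positivity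
        · intro j hj
          have hj' : j + 1 ≤ m := Finset.mem_range.mp hj
          have hJM : (j:ℝ) + 1 ≤ M := by rw [hMdef]; exact_mod_cast hj'
          have hJ0 : (0:ℝ) ≤ (j:ℝ) := Nat.cast_nonneg j
          apply div_le_div₀ (by linarith) (by linarith) (by linarith) (by linarith)
      have step2 : (2*K)^m / (m ! : ℝ) ≤ Real.exp (3*(m:ℕ)) := by
        rw [div_le_iff₀ hfmpos]
        have he2 : (2:ℝ) ≤ Real.exp 1 := by
          have := Real.exp_one_gt_d9
          linarith
        have h4 : (4:ℝ) ≤ Real.exp 2 := by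
          have : Real.exp 2 = Real.exp 1 * Real.exp 1 := by
            rw [← Real.exp_add]; norm_num
          nlinarith [Real.exp_pos 1]
        calc (2*K)^m ≤ (4*M)^m := by
              apply pow_le_pow_left₀ (by linarith) (by linarith)
          _ = 4^m * M^m := by rw [mul_pow]
          _ ≤ (Real.exp 2)^m * ((m ! : ℝ) * Real.exp m) := by
              apply mul_le_mul (pow_le_pow_left₀ (by norm_num) h4 m)
                (by rw [hMdef]; exact pow_self_le_factorial_mul_exp m)
                (by positivity) (by positivity)
          _ = Real.exp (3*(m:ℕ)) * (m ! : ℝ) := by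
              rw [← Real.exp_nat_mul]
              have hre : Real.exp (↑m * 2) * ((m ! : ℝ) * Real.exp ↑m)
                  = (m ! : ℝ) * (Real.exp (↑m * 2) * Real.exp ↑m) := by ring
              rw [hre, ← Real.exp_add, show ((m:ℕ):ℝ) * 2 + ↑m = 3*↑m from by ring]
              ring
      have step3 : Real.exp (3*(m:ℕ)) ≤ E := by
        rw [hE]
        apply Real.exp_le_exp.mpr
        rw [le_div_iff₀ hK0]
        have : ((m:ℕ):ℝ) = M := rfl
        rw [this]
        nlinarith
      exact le_trans step1 (le_trans step2 step3)
    · -- 2m < k : termwise exponential bound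
      have hK2M : 2*M + 1 ≤ K := by
        rw [hKdef, hMdef]
        exact_mod_cast hcase
      have step1 : Q ≤ ∏ _j ∈ Finset.range m, Real.exp (16*M/K) := by
        rw [hQ]
        apply Finset.prod_le_prod
        · intro j hj
          have hJ0 : (0:ℝ) ≤ (j:ℝ) := Nat.cast_nonneg j
          have hd : (0:ℝ) < K - 1 - M + j := by linarith
          positivity
        · intro j hj
          have hj' : j + 1 ≤ m := Finset.mem_range.mp hj
          have hJM : (j:ℝ) + 1 ≤ M := by rw [hMdef]; exact_mod_cast hj'
          have hJ0 : (0:ℝ) ≤ (j:ℝ) := Nat.cast_nonneg j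
          have hd : (0:ℝ) < K - 1 - M + j := by linarith
          rw [div_le_iff₀ hd]
          have hexp : 1 + 16*M/K ≤ Real.exp (16*M/K) := by
            have := Real.add_one_le_exp (16*M/K)
            linarith
          have hmain : K + 2 + (j:ℝ) ≤ (1 + 16*M/K) * (K - 1 - M + j) := by
            have hKdiv : (1 + 16*M/K) * (K - 1 - M + j) = (K + 16*M) * (K - 1 - M + j) / K := by
              field_simp
            rw [hKdiv, le_div_iff₀ hK0]
            nlinarith [mul_nonneg (show (0:ℝ) ≤ K - (2*M+1) by linarith) (show (0:ℝ) ≤ M by linarith),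
              mul_nonneg (show (0:ℝ) ≤ M - 1 by linarith) (show (0:ℝ) ≤ K by linarith),
              mul_nonneg (show (0:ℝ) ≤ M by linarith) (show (0:ℝ) ≤ 2*M - 1 by linarith),
              mul_nonneg (show (0:ℝ) ≤ M by linarith) (show (0:ℝ) ≤ (j:ℝ) by linarith)]
          calc K + 2 + (j:ℝ) ≤ (1 + 16*M/K) * (K - 1 - M + j) := hmain
            _ ≤ Real.exp (16*M/K) * (K - 1 - M + j) :=
                mul_le_mul_of_nonneg_right hexp (le_of_lt hd)
      have step2 : (∏ _j ∈ Finset.range m, Real.exp (16*M/K)) = E := by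
        rw [Finset.prod_const, Finset.card_range, hE, ← Real.exp_nat_mul]
        congr 1
        rw [hMdef]
        ring
      rw [← step2]
      exact step1
  -- assembly
  have hCC : 0 < C1 * C2 := mul_pos hC1pos hC2pos
  rw [abs_div, div_le_iff₀ hAxpos]
  have step : |aPoly k (x - M)| * (C1 * C2) ≤ E * |aPoly k x| * (C1 * C2) := by
    rw [key]
    calc |aPoly k x| * (B1 * B2) ≤ |aPoly k x| * (Q * (C1 * C2)) :=
          mul_le_mul_of_nonneg_left hBQ (le_of_lt hAxpos)
      _ ≤ |aPoly k x| * (E * (C1 * C2)) := by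
          apply mul_le_mul_of_nonneg_left _ (le_of_lt hAxpos)
          exact mul_le_mul_of_nonneg_right hQE (le_of_lt hCC)
      _ = E * |aPoly k x| * (C1 * C2) := by ring
  exact le_of_mul_le_mul_right step hCC
end

section
/- Let k ≥ 2 be a natural number and b_k(x) = x(2k-1-x). Then for all real x ∈ (k-2, k-1) and all natural numbers m with 1 ≤ m ≤ k-2, |b_k(x-m)/b_k(x)| ≤ e^(-m²/k²). -/
noncomputable def bPoly (k : ℕ) (x : ℝ) : ℝ := x * (2 * (k : ℝ) - 1 - x)

theorem stmt_4 (k : ℕ) (hk : 2 ≤ k) (x : ℝ)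
    (hx1 : (k : ℝ) - 2 < x) (hx2 : x < (k : ℝ) - 1)
    (m : ℕ) (hm1 : 1 ≤ m) (hm2 : m ≤ k - 2) :
    |bPoly k (x - m) / bPoly k x| ≤ Real.exp (-(m : ℝ) ^ 2 / (k : ℝ) ^ 2) := by
  have hk2 : (2:ℝ) ≤ (k:ℝ) := by exact_mod_cast hk
  have hm2' : (m:ℝ) ≤ (k:ℝ) - 2 := by
    have h : m + 2 ≤ k := by omega
    have h' := (Nat.cast_le (α := ℝ)).mpr h
    push_cast at h'; linarith
  have hm1' : (1:ℝ) ≤ (m:ℝ) := by exact_mod_cast hm1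
  have hx0 : 0 < x := by linarith
  have hxm : 0 < x - m := by linarith
  have hbx : 0 < bPoly k x := by unfold bPoly; nlinarith
  have hbxm : 0 < bPoly k (x - m) := by unfold bPoly; nlinarith
  have hkpos : (0:ℝ) < (k:ℝ)^2 := by positivity
  have hkey : bPoly k (x - m) * (k:ℝ)^2 ≤ ((k:ℝ)^2 - (m:ℝ)^2) * bPoly k x := by
    unfold bPoly
    have hA : x*(2*(k:ℝ)-1-x) ≤ ((k:ℝ)-1)*((k:ℝ)+1) :=
      mul_le_mul (by linarith) (by linarith) (by linarith) (by linarith)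
    nlinarith [mul_le_mul_of_nonneg_left hA (sq_nonneg ((m:ℝ))),
      mul_nonneg (mul_nonneg hkpos.le (by linarith : (0:ℝ) ≤ (m:ℝ)))
        (by linarith : (0:ℝ) ≤ 2*(k:ℝ)-1-2*x), sq_nonneg ((m:ℝ))]
  have h1 : bPoly k (x - m) ≤ (1 - (m:ℝ)^2/(k:ℝ)^2) * bPoly k x := by
    rw [show (1 - (m:ℝ)^2/(k:ℝ)^2) * bPoly k x = ((k:ℝ)^2 - (m:ℝ)^2) * bPoly k x / (k:ℝ)^2
      from by field_simp, le_div_iff₀ hkpos]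
    exact hkey
  have hexp : 1 - (m:ℝ)^2/(k:ℝ)^2 ≤ Real.exp (-((m:ℝ)^2/(k:ℝ)^2)) := by
    have := Real.add_one_le_exp (-((m:ℝ)^2/(k:ℝ)^2)); linarith
  rw [abs_div, abs_of_pos hbxm, abs_of_pos hbx, div_le_iff₀ hbx, neg_div]
  calc bPoly k (x - m) ≤ (1 - (m:ℝ)^2/(k:ℝ)^2) * bPoly k x := h1
    _ ≤ Real.exp (-((m:ℝ)^2/(k:ℝ)^2)) * bPoly k x :=
      mul_le_mul_of_nonneg_right hexp hbx.le
end

section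
/- Let a, b, C be real constants with 1.5 ≤ a < b < C, and define p(x) = (1 - (x-a)(x-b)/C²)^(4⌈C²⌉). Then: (1) p(x) ≥ 1 for all x ∈ [a,b]; (2) |p(x)| ≤ 1/2 for all x ∈ [0,1]; (3) |p(x)| ≤ 1 for all x ∈ [0,a] ∪ [b,C]. -/
set_option maxHeartbeats 1000000


theorem stmt_8 (a b C : ℝ) (ha : 1.5 ≤ a) (hab : a < b) (hbC : b < C)
    (p : ℝ → ℝ) (hp : ∀ x, p x = (1 - (x - a) * (x - b) / C ^ 2) ^ (4 * ⌈C ^ 2⌉₊)) :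
    (∀ x ∈ Set.Icc a b, p x ≥ 1) ∧
    (∀ x ∈ Set.Icc (0 : ℝ) 1, |p x| ≤ 1 / 2) ∧
    (∀ x ∈ Set.Icc (0 : ℝ) a ∪ Set.Icc b C, |p x| ≤ 1) := by
  have hC : (0:ℝ) < C := by linarith
  have hC2 : (0:ℝ) < C ^ 2 := by positivity
  refine ⟨?_, ?_, ?_⟩
  · rintro x ⟨hx1, hx2⟩
    rw [hp]
    apply one_le_pow₀
    have h1 : (x - a) * (x - b) ≤ 0 :=
      mul_nonpos_of_nonneg_of_nonpos (by linarith) (by linarith)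
    have h2 : (x - a) * (x - b) / C ^ 2 ≤ 0 := div_nonpos_of_nonpos_of_nonneg h1 hC2.le
    linarith
  · rintro x ⟨hx1, hx2⟩
    rw [hp]
    set n := 4 * ⌈C ^ 2⌉₊ with hn
    set u : ℝ := 1 / (4 * C ^ 2) with hu
    have hu0 : 0 < u := by positivity
    have hC1 : (1:ℝ) ≤ C := by linarith
    have hu1 : u ≤ 1 / 2 := by
      rw [hu, div_le_div_iff₀ (by positivity) (by norm_num)]
      nlinarith
    have hq0 : 0 ≤ 1 - (x - a) * (x - b) / C ^ 2 := by
      have h1 : (x - a) * (x - b) ≤ C ^ 2 := by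
        nlinarith [mul_nonneg hx1 (show (0:ℝ) ≤ a + b - x by linarith),
          mul_nonneg (show (0:ℝ) ≤ C - a by linarith) (show (0:ℝ) ≤ C - b by linarith),
          mul_nonneg (show (0:ℝ) ≤ a by linarith) (show (0:ℝ) ≤ C - b by linarith),
          mul_nonneg (show (0:ℝ) ≤ b by linarith) (show (0:ℝ) ≤ C - a by linarith)]
      have := div_le_one_of_le₀ h1 hC2.le
      linarith
    have hqu : 1 - (x - a) * (x - b) / C ^ 2 ≤ 1 - u := by
      have h1 : (1:ℝ)/4 ≤ (x - a) * (x - b) := by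
        have ha' : (1/2:ℝ) ≤ a - x := by linarith
        have hb' : (1/2:ℝ) ≤ b - x := by linarith
        nlinarith
      have h2 : u ≤ (x - a) * (x - b) / C ^ 2 := by
        rw [hu, div_le_div_iff₀ (by positivity) hC2]
        nlinarith
      linarith
    have hpow : (1 - (x - a) * (x - b) / C ^ 2) ^ n ≤ (1 - u) ^ n :=
      pow_le_pow_left₀ hq0 hqu n
    have hceil : C ^ 2 ≤ (⌈C ^ 2⌉₊ : ℝ) := Nat.le_ceil _
    have hn4 : (n : ℝ) = 4 * (⌈C ^ 2⌉₊ : ℝ) := by rw [hn]; push_cast; ring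
    have hnu : (1:ℝ) ≤ (n : ℝ) * u := by
      rw [hn4, hu, mul_one_div, le_div_iff₀ (by positivity)]
      nlinarith
    have hbern : (2:ℝ) ≤ (1 + u) ^ n := by
      have := one_add_mul_le_pow (show (-2:ℝ) ≤ u by linarith) n
      linarith
    have hu12 : 0 ≤ 1 - u := by linarith
    have hkey : (1 - u) ^ n * (1 + u) ^ n ≤ 1 := by
      rw [← mul_pow]
      apply pow_le_one₀ (by nlinarith) (by nlinarith)
    have h3 : (1 - u) ^ n * 2 ≤ 1 :=
      le_trans (mul_le_mul_of_nonneg_left hbern (pow_nonneg hu12 n)) hkey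
    have hfin : (1 - (x - a) * (x - b) / C ^ 2) ^ n ≤ 1 / 2 := by linarith
    rw [abs_of_nonneg (pow_nonneg hq0 n)]
    exact hfin
  · rintro x (⟨hx1, hx2⟩ | ⟨hx1, hx2⟩) <;> rw [hp, abs_pow] <;>
      refine pow_le_one₀ (abs_nonneg _) ?_
    · have ht0 : 0 ≤ (x - a) * (x - b) := by
        nlinarith [mul_nonneg (show (0:ℝ) ≤ a - x by linarith)
          (show (0:ℝ) ≤ b - x by linarith)]
      have ht1 : (x - a) * (x - b) ≤ C ^ 2 := by
        nlinarith [mul_nonneg hx1 (show (0:ℝ) ≤ a + b - x by linarith),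
          mul_nonneg (show (0:ℝ) ≤ C - a by linarith) (show (0:ℝ) ≤ C - b by linarith),
          mul_nonneg (show (0:ℝ) ≤ a by linarith) (show (0:ℝ) ≤ C - b by linarith),
          mul_nonneg (show (0:ℝ) ≤ b by linarith) (show (0:ℝ) ≤ C - a by linarith)]
      have h1 : (x - a) * (x - b) / C ^ 2 ≤ 1 := div_le_one_of_le₀ ht1 hC2.le
      have h2 : 0 ≤ (x - a) * (x - b) / C ^ 2 := div_nonneg ht0 hC2.le
      rw [abs_le]; constructor <;> linarith
    · have ht0 : 0 ≤ (x - a) * (x - b) :=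
        mul_nonneg (by linarith) (by linarith)
      have ht1 : (x - a) * (x - b) ≤ C ^ 2 := by
        nlinarith [mul_nonneg (show (0:ℝ) ≤ C - (x - a) by linarith)
            (show (0:ℝ) ≤ C - (x - b) by linarith),
          mul_nonneg (show (0:ℝ) ≤ x - a by linarith) (show (0:ℝ) ≤ C - (x - b) by linarith),
          mul_nonneg (show (0:ℝ) ≤ x - b by linarith) (show (0:ℝ) ≤ C - (x - a) by linarith)]
      have h1 : (x - a) * (x - b) / C ^ 2 ≤ 1 := div_le_one_of_le₀ ht1 hC2.le
      have h2 : 0 ≤ (x - a) * (x - b) / C ^ 2 := div_nonneg ht0 hC2.le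
      rw [abs_le]; constructor <;> linarith
end

section
/- Let n ≥ 1 and d be natural numbers with d > (π/2)·√n, let r₀ be the smallest root of x ↦ T_d(x/n - 1), let α > 0, and let m be an even natural number. Define s(x) = α·T_d((x-1+r₀)/n - 1)^m. Then s(0) ≥ α·((1/4)·(1 + sqrt(2(1-r₀)/n))^d)^m. -/
/-!
Substituting `x = cosh u` turns `T_d` into `cosh (d u) ≥ e^{d u} / 2`, and for `x = 1 + y`
we have `e^u = x + √(x² - 1) ≥ 1 + √(2y)`; the sign `(-1)^d` coming from `T_d(-x)` disappears
under an even power. The hypothesis on `d` puts the root `n (1 - cos (π / 2d)) ≤ n π² / 8d²`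
of `x ↦ T_d (x / n - 1)` below `1`, so `r₀ ≤ 1` and the point `-(1 + (1 - r₀) / n)` at which
`s 0` evaluates `T_d` lies to the left of `-1`.
-/

open Polynomial Polynomial.Chebyshev Real

theorem add_sqrt_sq_sub_one_pow_le_two_mul_eval_T (d : ℕ) {x : ℝ} (hx : 1 ≤ x) :
    (x + √(x ^ 2 - 1)) ^ d ≤ 2 * (T ℝ d).eval x := by
  have hcosh : (T ℝ d).eval x = cosh (d * arcosh x) := by
    simpa [cosh_arcosh hx] using T_real_cosh (arcosh x) d
  rw [hcosh, ← exp_arcosh hx, ← exp_nat_mul, cosh_eq]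
  linarith [exp_pos (-(d * arcosh x))]

theorem one_add_sqrt_two_mul_pow_le_two_mul_abs_eval_T_neg (d : ℕ) {y : ℝ} (hy : 0 ≤ y) :
    (1 + √(2 * y)) ^ d ≤ 2 * |(T ℝ d).eval (-(1 + y))| := by
  have hx : (1 : ℝ) ≤ 1 + y := by linarith
  have hbase : 1 + √(2 * y) ≤ (1 + y) + √((1 + y) ^ 2 - 1) := by
    gcongr
    nlinarith [sq_nonneg y]
  rw [T_eval_neg, abs_mul, Int.cast_negOnePow_natCast, abs_neg_one_pow, one_mul,
    abs_of_nonneg (zero_le_one.trans (one_le_eval_T_real d hx))]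
  exact (pow_le_pow_left₀ (by positivity) hbase d).trans
    (add_sqrt_sq_sub_one_pow_le_two_mul_eval_T d hx)

theorem eval_T_real_neg_cos_pi_div_two_mul {d : ℕ} (hd : d ≠ 0) :
    (T ℝ d).eval (-cos (π / (2 * d))) = 0 := by
  have hd' : (d : ℝ) ≠ 0 := Nat.cast_ne_zero.mpr hd
  have harg : ((d : ℤ) : ℝ) * (π / (2 * d)) = π / 2 := by field_simp; push_cast; ring
  rw [T_eval_neg, T_real_cos, harg, cos_pi_div_two, mul_zero]

theorem mul_one_sub_cos_pi_div_two_mul_le_one {n d : ℝ} (hn : 0 ≤ n) (hd : π / 2 * √n < d) :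
    n * (1 - cos (π / (2 * d))) ≤ 1 := by
  have hd0 : 0 < d := lt_of_le_of_lt (by positivity) hd
  have hsq : π ^ 2 * n < 4 * d ^ 2 := by
    have := mul_self_lt_mul_self (by positivity) hd
    nlinarith [sq_sqrt hn]
  calc n * (1 - cos (π / (2 * d))) ≤ n * ((π / (2 * d)) ^ 2 / 2) := by
        gcongr; linarith [one_sub_sq_div_two_le_cos (x := π / (2 * d))]
    _ = π ^ 2 * n / (8 * d ^ 2) := by field_simp; ring
    _ ≤ 1 := by rw [div_le_one (by positivity)]; linarith [sq_nonneg d]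

theorem stmt_11 (n d : ℕ) (hn : 1 ≤ n)
    (hd : (d : ℝ) > Real.pi / 2 * Real.sqrt n)
    (r₀ : ℝ) (hr₀ : IsLeast {x : ℝ | (Polynomial.Chebyshev.T ℝ d).eval (x / n - 1) = 0} r₀)
    (α : ℝ) (hα : 0 < α) (m : ℕ) (hm : Even m)
    (s : ℝ → ℝ)
    (hs : ∀ x, s x = α * ((Polynomial.Chebyshev.T ℝ d).eval ((x - 1 + r₀) / n - 1)) ^ m) :
    s 0 ≥ α * ((1 / 4) * (1 + Real.sqrt (2 * (1 - r₀) / n)) ^ d) ^ m := by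
  have hn0 : (0 : ℝ) < n := by exact_mod_cast hn
  have hd0 : d ≠ 0 := by
    have : (0 : ℝ) < d := (by positivity : (0 : ℝ) ≤ π / 2 * √n).trans_lt hd
    exact_mod_cast this.ne'
  have hroot : n * (1 - cos (π / (2 * d))) ∈
      {x : ℝ | (T ℝ d).eval (x / n - 1) = 0} := by
    show (T ℝ d).eval (_ / (n : ℝ) - 1) = 0
    rw [mul_div_cancel_left₀ _ hn0.ne', sub_sub_cancel_left]
    exact eval_T_real_neg_cos_pi_div_two_mul hd0
  have hr₀_le : r₀ ≤ 1 :=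
    (hr₀.2 hroot).trans (mul_one_sub_cos_pi_div_two_mul_le_one hn0.le hd)
  set y := (1 - r₀) / n
  have hy : 0 ≤ y := div_nonneg (by linarith) hn0.le
  have harg : (0 - 1 + r₀) / n - 1 = -(1 + y) := by simp only [y]; field_simp; ring
  rw [hs 0, harg, ← hm.pow_abs, show 2 * (1 - r₀) / n = 2 * y by ring]
  gcongr
  linarith [one_add_sqrt_two_mul_pow_le_two_mul_abs_eval_T_neg d hy,
    (by positivity : (0 : ℝ) ≤ (1 + √(2 * y)) ^ d)]
end

section
/- Let n be a sufficiently large natural number and define p₂(x) = T_{2√n·log n}(2(x-3)/n - 1)² / (n·c₂) where c₂ = (1/n)·T_{2√n·log n}(-2/n - 1)², scaled so that p₂(2) = 1/2. Then p₂(x) ≤ 1/(2n) for all x ∈ [3, n]. -/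
lemma T_eval_neg_cosh_sq (d : ℕ) (t : ℝ) :
    ((Polynomial.Chebyshev.T ℝ (d : ℤ)).eval (-Real.cosh t)) ^ 2
      = (Real.cosh (d * t)) ^ 2 := by
  have key : ((Polynomial.Chebyshev.T ℂ (d : ℤ)).eval (-(Real.cosh t : ℂ))) ^ 2
      = ((Real.cosh (d * t) : ℝ) : ℂ) ^ 2 := by
    have h1 : (-(Real.cosh t : ℂ)) = Complex.cos ((Real.pi : ℂ) + (t : ℂ) * Complex.I) := by
      rw [Complex.cos_add, Complex.cos_pi, Complex.sin_pi, Complex.cos_mul_I]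
      push_cast [Complex.ofReal_cosh]
      ring
    rw [h1, Polynomial.Chebyshev.T_complex_cos]
    have h2 : ((d : ℤ) : ℂ) * ((Real.pi : ℂ) + (t : ℂ) * Complex.I)
        = (d : ℂ) * Real.pi + ((d : ℝ) * t : ℝ) * Complex.I := by push_cast; ring
    rw [h2, Complex.cos_add]
    have hs : Complex.sin ((d : ℂ) * Real.pi) = 0 := by
      exact_mod_cast Complex.sin_int_mul_pi (d : ℤ)
    have hc : Complex.cos ((d : ℂ) * Real.pi) ^ 2 = 1 := by
      have h := Complex.sin_sq_add_cos_sq ((d : ℂ) * Real.pi)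
      rw [hs] at h
      linear_combination h
    rw [hs, Complex.cos_mul_I, Complex.ofReal_cosh]
    push_cast
    linear_combination (Complex.cosh ((d:ℂ) * (t:ℂ)))^2 * hc
  have := Polynomial.Chebyshev.complex_ofReal_eval_T (-Real.cosh t) (d : ℤ)
  rw [show (-(Real.cosh t : ℂ)) = ((-Real.cosh t : ℝ) : ℂ) by push_cast; ring, ← this] at key
  exact_mod_cast key

lemma T_sq_le_one (d : ℤ) (y : ℝ) (h1 : -1 ≤ y) (h2 : y ≤ 1) :
    ((Polynomial.Chebyshev.T ℝ d).eval y) ^ 2 ≤ 1 := by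
  rw [← Real.cos_arccos h1 h2, Polynomial.Chebyshev.T_real_cos]
  nlinarith [Real.neg_one_le_cos (d * Real.arccos y), Real.cos_le_one (d * Real.arccos y)]

lemma cosh_le_one_add_sq {s : ℝ} (h0 : 0 ≤ s) (h1 : s ≤ 1) : Real.cosh s ≤ 1 + s ^ 2 := by
  have h := Real.cosh_le_exp_half_sq s
  have hy0 : (0:ℝ) ≤ s ^ 2 / 2 := by positivity
  have hy1 : s ^ 2 / 2 ≤ 1 / 2 := by nlinarith
  have he := Real.add_one_le_exp (-(s ^ 2 / 2))
  have hp : 0 < Real.exp (s ^ 2 / 2) := Real.exp_pos _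
  have hinv : Real.exp (-(s ^ 2 / 2)) = 1 / Real.exp (s ^ 2 / 2) := by
    rw [Real.exp_neg]; ring
  rw [hinv] at he
  have : Real.exp (s ^ 2 / 2) * (1 - s ^ 2 / 2) ≤ 1 := by
    have := mul_le_mul_of_nonneg_left he hp.le
    field_simp at this ⊢
    nlinarith
  nlinarith

lemma exp_div_two_le_cosh (u : ℝ) : Real.exp u / 2 ≤ Real.cosh u := by
  rw [Real.cosh_eq]
  have := Real.exp_pos (-u)
  linarith

lemma exists_cosh_eq {v : ℝ} (h1 : 1 ≤ v) (h2 : v ≤ 3) : ∃ t ∈ Set.Icc (0:ℝ) 2, Real.cosh t = v := by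
  have hc : ContinuousOn Real.cosh (Set.Icc 0 2) := Real.continuous_cosh.continuousOn
  have h3 : (3:ℝ) ≤ Real.cosh 2 := by
    have he := Real.exp_one_gt_d9
    have h4 : Real.exp 2 = Real.exp 1 * Real.exp 1 := by
      rw [← Real.exp_add]; norm_num
    have := exp_div_two_le_cosh 2
    nlinarith
  have := intermediate_value_Icc (by norm_num : (0:ℝ) ≤ 2) hc
  have hv : v ∈ Set.Icc (Real.cosh 0) (Real.cosh 2) := by
    rw [Real.cosh_zero]; exact ⟨h1, le_trans h2 h3⟩
  obtain ⟨t, ht, hte⟩ := this hv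
  exact ⟨t, ht, hte⟩

theorem stmt_15 :
    ∃ N : ℕ, ∀ n : ℕ, N ≤ n →
      ∀ x ∈ Set.Icc (3 : ℝ) (n : ℝ),
        ((Polynomial.Chebyshev.T ℝ ⌈2 * Real.sqrt n * Real.log n⌉₊).eval
            (2 * (x - 3) / n - 1)) ^ 2 /
          ((n : ℝ) * ((1 / (n : ℝ)) *
            ((Polynomial.Chebyshev.T ℝ ⌈2 * Real.sqrt n * Real.log n⌉₊).eval
              (-2 / (n : ℝ) - 1)) ^ 2)) ≤ 1 / (2 * n) := by
  use 4
  intro n hn x hx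
  obtain ⟨hx3, hxn⟩ := hx
  have hn4 : (4:ℝ) ≤ (n:ℝ) := by exact_mod_cast hn
  have hn0 : (0:ℝ) < n := by linarith
  set d : ℕ := ⌈2 * Real.sqrt n * Real.log n⌉₊ with hd
  -- numerator bound
  have hnum : ((Polynomial.Chebyshev.T ℝ (d:ℤ)).eval (2 * (x - 3) / n - 1)) ^ 2 ≤ 1 := by
    apply T_sq_le_one
    · have : 0 ≤ 2 * (x - 3) / n := div_nonneg (by linarith) hn0.le
      linarith
    · have : 2 * (x - 3) / n ≤ 2 := by
        rw [div_le_iff₀ hn0]; linarith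
      linarith
  -- denominator bound
  obtain ⟨t, ⟨ht0, ht2⟩, htc⟩ := exists_cosh_eq (v := 1 + 2 / (n:ℝ))
    (by nlinarith [div_pos (by norm_num : (0:ℝ)<2) hn0])
    (by
      have h2 : 2 / (n:ℝ) ≤ 2 := by
        rw [div_le_iff₀ hn0]; nlinarith
      linarith)
  have hsn : (0:ℝ) < Real.sqrt n := Real.sqrt_pos.mpr hn0
  have hsn1 : (1:ℝ) ≤ Real.sqrt n := by
    rw [show (1:ℝ) = Real.sqrt 1 by simp]
    exact Real.sqrt_le_sqrt (by linarith)
  have hts : 1 / Real.sqrt n ≤ t := by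
    have hs1 : 1 / Real.sqrt n ≤ 1 := by
      rw [div_le_one hsn]; exact hsn1
    have hsq : (1 / Real.sqrt n) ^ 2 = 1 / n := by
      rw [div_pow, one_pow, Real.sq_sqrt hn0.le]
    have hle : Real.cosh (1 / Real.sqrt n) ≤ Real.cosh t := by
      rw [htc]
      calc Real.cosh (1 / Real.sqrt n) ≤ 1 + (1 / Real.sqrt n) ^ 2 :=
            cosh_le_one_add_sq (by positivity) hs1
        _ = 1 + 1 / n := by rw [hsq]
        _ ≤ 1 + 2 / n := by
            have hp : (0:ℝ) < 1 / n := by positivity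
            have h22 : (2:ℝ) / n = 1 / n + 1 / n := by ring
            linarith
    have := Real.cosh_le_cosh.mp hle
    rwa [abs_of_nonneg (by positivity), abs_of_nonneg ht0] at this
  have hlog : 0 ≤ Real.log n := Real.log_nonneg (by linarith)
  have hdge : 2 * Real.sqrt n * Real.log n ≤ (d:ℝ) := Nat.le_ceil _
  have hdt : 2 * Real.log n ≤ (d:ℝ) * t := by
    have h1 : 2 * Real.sqrt n * Real.log n * (1 / Real.sqrt n) ≤ (d:ℝ) * t := by
      apply mul_le_mul hdge hts (by positivity) (by positivity)
    calc 2 * Real.log n = 2 * Real.sqrt n * Real.log n * (1 / Real.sqrt n) := by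
          field_simp
      _ ≤ (d:ℝ) * t := h1
  have hexp : (n:ℝ)^2 / 2 ≤ Real.cosh ((d:ℝ) * t) := by
    calc (n:ℝ)^2 / 2 = Real.exp (2 * Real.log n) / 2 := by
          rw [two_mul, Real.exp_add, Real.exp_log hn0]; ring
      _ ≤ Real.exp ((d:ℝ) * t) / 2 := by
          have := Real.exp_le_exp.mpr hdt; linarith
      _ ≤ Real.cosh ((d:ℝ) * t) := exp_div_two_le_cosh _
  have hDeq : ((Polynomial.Chebyshev.T ℝ (d:ℤ)).eval (-2 / (n:ℝ) - 1)) ^ 2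
      = (Real.cosh ((d:ℝ) * t)) ^ 2 := by
    rw [show -2 / (n:ℝ) - 1 = -Real.cosh t by rw [htc]; ring]
    exact T_eval_neg_cosh_sq d t
  have hD2 : 2 * (n:ℝ) ≤ ((Polynomial.Chebyshev.T ℝ (d:ℤ)).eval (-2 / (n:ℝ) - 1)) ^ 2 := by
    rw [hDeq]
    nlinarith [hexp, hn4, sq_nonneg (Real.cosh ((d:ℝ) * t) - (n:ℝ)^2/2), sq_nonneg ((n:ℝ) - 4), mul_nonneg (mul_nonneg hn0.le hn0.le) hn0.le]
  have hdenom : (n:ℝ) * ((1 / (n:ℝ)) *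
      ((Polynomial.Chebyshev.T ℝ (d:ℤ)).eval (-2 / (n:ℝ) - 1)) ^ 2)
      = ((Polynomial.Chebyshev.T ℝ (d:ℤ)).eval (-2 / (n:ℝ) - 1)) ^ 2 := by
    field_simp
  rw [hdenom]
  exact div_le_div₀ (by norm_num) hnum (by positivity) hD2
end
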